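/- Under the setup of the paper's Theorem 1: let h be an ℝ^d-valued random vector with mean m = (1-γ)μ_i + γμ_t for class centroids μ_i, μ_t ∈ ℝ^d and γ ∈ [0,1), where h is a uniform average of n independent coordinate-wise-bounded (by S > 0) random vectors with coordinate independence. Suppose the event A of a successful attack implies ‖h - μ_t‖₂ < ε for some 0 < ε. Then P(A) ≤ P(‖h - m‖₂ ≥ (1-γ)‖μ_t - μ_i‖₂ - ε) ≤ 2d·exp(-n·((1-γ)‖μ_t-μ_i‖₂ - ε)² / (2 d S²)), provided (1-γ)‖μ_t - μ_i‖₂ - ε ≥ 0. -/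

import Mathlib

/-!
Since `m - μt = (1 - γ) • (μi - μt)`, the triangle inequality turns `‖h - μt‖ < ε` into
`(1 - γ) ‖μt - μi‖ - ε ≤ ‖h - m‖`. If `t ≤ ‖h - m‖`, some coordinate of `h - m` has size at least
`t / √d`. Each coordinate of `h - m` is the average of `n` independent centred variables with
values in an interval of length `2S`, so by Hoeffding's inequality it deviates by `t / √d` with
probability at most `2 exp (-n t² / (2 d S²))`; a union bound over the `d` coordinates finishes.
-/

open MeasureTheory ProbabilityTheory Real

section Hoeffding

variable {Ω ι : Type*} {mΩ : MeasurableSpace Ω} {μ : Measure Ω}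

lemma hasSubgaussianMGF_sub_integral_of_abs_le [IsProbabilityMeasure μ] {X : Ω → ℝ}
    (hX : AEMeasurable X μ) {S : ℝ} (hb : ∀ᵐ ω ∂μ, |X ω| ≤ S) :
    HasSubgaussianMGF (fun ω ↦ X ω - μ[X]) (‖S‖₊ ^ 2) μ := by
  have hIcc : ∀ᵐ ω ∂μ, X ω ∈ Set.Icc (-S) S := by
    filter_upwards [hb] with ω hω using abs_le.1 hω
  convert hasSubgaussianMGF_of_mem_Icc hX hIcc using 2
  rw [sub_neg_eq_add, ← two_mul, nnnorm_mul, Real.nnnorm_two, mul_div_cancel_left₀ _ two_ne_zero]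

lemma measureReal_abs_sum_sub_integral_ge_le_of_iIndepFun {X : ι → Ω → ℝ}
    (hX : ∀ i, AEMeasurable (X i) μ) (hindep : iIndepFun X μ) {S : ℝ}
    (hb : ∀ i, ∀ᵐ ω ∂μ, |X i ω| ≤ S) (s : Finset ι) {ε : ℝ} (hε : 0 ≤ ε) :
    μ.real {ω | ε ≤ |∑ i ∈ s, (X i ω - μ[X i])|} ≤ 2 * exp (-ε ^ 2 / (2 * (s.card * S ^ 2))) := by
  have := hindep.isProbabilityMeasure
  set Y : ι → Ω → ℝ := fun i ω ↦ X i ω - μ[X i]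
  have hYindep : iIndepFun Y μ := by
    have hcomp := hindep.comp (fun i x ↦ x - μ[X i]) fun i ↦ by fun_prop
    exact hcomp
  have hsubG i : HasSubgaussianMGF (Y i) (‖S‖₊ ^ 2) μ :=
    hasSubgaussianMGF_sub_integral_of_abs_le (hX i) (hb i)
  have hparam : ((∑ _i ∈ s, ‖S‖₊ ^ 2 : NNReal) : ℝ) = s.card * S ^ 2 := by
    push_cast
    simp [sq_abs]
  have hupper : μ.real {ω | ε ≤ ∑ i ∈ s, Y i ω} ≤ exp (-ε ^ 2 / (2 * (s.card * S ^ 2))) := by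
    rw [← hparam]
    exact HasSubgaussianMGF.measure_sum_ge_le_of_iIndepFun hYindep (fun i _ ↦ hsubG i) hε
  have hlower : μ.real {ω | ε ≤ ∑ i ∈ s, (-Y i) ω} ≤ exp (-ε ^ 2 / (2 * (s.card * S ^ 2))) := by
    rw [← hparam]
    exact HasSubgaussianMGF.measure_sum_ge_le_of_iIndepFun
      (hYindep.comp (fun _ x ↦ -x) fun _ ↦ measurable_neg) (fun i _ ↦ (hsubG i).neg) hε
  calc μ.real {ω | ε ≤ |∑ i ∈ s, Y i ω|}
      ≤ μ.real ({ω | ε ≤ ∑ i ∈ s, Y i ω} ∪ {ω | ε ≤ ∑ i ∈ s, (-Y i) ω}) := by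
        refine measureReal_mono (fun ω hω ↦ ?_)
        simpa only [Set.mem_union, Set.mem_ofPred_eq, Pi.neg_apply, Finset.sum_neg_distrib,
          le_abs] using hω
    _ ≤ _ := (measureReal_union_le _ _).trans (by linarith)

lemma measureReal_abs_sub_integral_ge_le_of_eq_average [Fintype ι] [Nonempty ι] {X : ι → Ω → ℝ}
    (hX : ∀ i, AEMeasurable (X i) μ) (hindep : iIndepFun X μ) {S : ℝ}
    (hb : ∀ i, ∀ᵐ ω ∂μ, |X i ω| ≤ S) {Y : Ω → ℝ}
    (hY : ∀ ω, Y ω = (1 / Fintype.card ι : ℝ) * ∑ i, X i ω) {ε : ℝ} (hε : 0 ≤ ε) :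
    μ.real {ω | ε ≤ |Y ω - μ[Y]|} ≤ 2 * exp (-(Fintype.card ι * ε ^ 2) / (2 * S ^ 2)) := by
  have := hindep.isProbabilityMeasure
  set N : ℝ := (Fintype.card ι : ℝ)
  have hN : 0 < N := by positivity
  have hint i : Integrable (X i) μ :=
    .of_bound (hX i).aestronglyMeasurable S (by simpa only [Real.norm_eq_abs] using hb i)
  have hdev ω : Y ω - μ[Y] = N⁻¹ * ∑ i, (X i ω - μ[X i]) := by
    simp_rw [hY, integral_const_mul, integral_finsetSum _ fun i _ ↦ hint i,
      Finset.sum_sub_distrib]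
    ring
  have hset : {ω | ε ≤ |Y ω - μ[Y]|} = {ω | N * ε ≤ |∑ i, (X i ω - μ[X i])|} := by
    ext ω
    rw [Set.mem_ofPred_eq, Set.mem_ofPred_eq, hdev, abs_mul, abs_inv, abs_of_pos hN,
      inv_mul_eq_div, le_div_iff₀' hN]
  rw [hset]
  convert measureReal_abs_sum_sub_integral_ge_le_of_iIndepFun hX hindep hb Finset.univ
    (ε := N * ε) (by positivity) using 3
  rw [Finset.card_univ, ← mul_div_mul_left (-(N * ε ^ 2)) (2 * S ^ 2) hN.ne']
  ring

end Hoeffding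

lemma EuclideanSpace.exists_div_sqrt_card_le_abs_of_le_norm {ι : Type*} [Fintype ι] [Nonempty ι]
    {x : EuclideanSpace ℝ ι} {t : ℝ} (ht : t ≤ ‖x‖) : ∃ i, t / √(Fintype.card ι) ≤ |x i| := by
  obtain ⟨i, hi⟩ := exists_eq_ciSup_of_finite (f := fun i ↦ ‖inner ℝ (basisFun ι ℝ i) x‖)
  refine ⟨i, ?_⟩
  have := (basisFun ι ℝ).norm_le_card_mul_iSup_norm_inner x
  rw [← hi, basisFun_inner, Real.norm_eq_abs] at this
  rw [div_le_iff₀' (by positivity)]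
  exact ht.trans this

lemma one_sub_mul_norm_sub_le_norm_sub {E : Type*} [SeminormedAddCommGroup E] [NormedSpace ℝ E]
    (x y : E) (γ : ℝ) : (1 - γ) * ‖y - x‖ ≤ ‖(1 - γ) • x + γ • y - y‖ := by
  rw [← AffineMap.lineMap_apply_module, ← dist_eq_norm (AffineMap.lineMap x y γ),
    dist_lineMap_right, dist_eq_norm', Real.norm_eq_abs]
  exact mul_le_mul_of_nonneg_right (le_abs_self _) (norm_nonneg _)

lemma sub_le_norm_sub_of_norm_sub_lt {E : Type*} [SeminormedAddCommGroup E] {x y z : E} {ε : ℝ}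
    (h : ‖x - z‖ < ε) : ‖y - z‖ - ε ≤ ‖x - y‖ := by
  have := norm_sub_le_norm_sub_add_norm_sub y x z
  rw [norm_sub_rev y x] at this
  linarith

theorem stmt_11_general {Ω : Type*} [MeasureSpace Ω] [IsProbabilityMeasure (ℙ : Measure Ω)]
    (d n : ℕ) (hn : 0 < n) (hd : 0 < d)
    (ξ : Fin n × Fin d → Ω → ℝ)
    (hmeas : ∀ p, Measurable (ξ p))
    (hindep : iIndepFun ξ ℙ)
    (S : ℝ)
    (hbound : ∀ p, ∀ᵐ ω ∂ℙ, |ξ p ω| ≤ S)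
    (h : Ω → EuclideanSpace ℝ (Fin d))
    (hdef : ∀ ω, ∀ j : Fin d, h ω j = (1 / n : ℝ) * ∑ k : Fin n, ξ (k, j) ω)
    (μi μt m : EuclideanSpace ℝ (Fin d)) (γ : ℝ)
    (hm : m = (1 - γ) • μi + γ • μt)
    (hmean : ∀ j : Fin d, m j = ∫ ω, h ω j ∂ℙ)
    (ε : ℝ)
    (A : Set Ω) (hA : ∀ ω ∈ A, ‖h ω - μt‖ < ε)
    (hεsmall : 0 ≤ (1 - γ) * ‖μt - μi‖ - ε) :
    ℙ A ≤ ℙ {ω | (1 - γ) * ‖μt - μi‖ - ε ≤ ‖h ω - m‖} ∧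
    ℙ {ω | (1 - γ) * ‖μt - μi‖ - ε ≤ ‖h ω - m‖} ≤
      ENNReal.ofReal (2 * d *
        Real.exp (-(n * ((1 - γ) * ‖μt - μi‖ - ε) ^ 2) / (2 * d * S ^ 2))) := by
  set t := (1 - γ) * ‖μt - μi‖ - ε
  have hmfar : (1 - γ) * ‖μt - μi‖ ≤ ‖m - μt‖ := hm ▸ one_sub_mul_norm_sub_le_norm_sub μi μt γ
  refine ⟨measure_mono fun ω hω ↦ ?_, ?_⟩
  · exact (sub_le_sub_right hmfar ε).trans (sub_le_norm_sub_of_norm_sub_lt (hA ω hω))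
  have := Fin.pos_iff_nonempty.1 hn
  have := Fin.pos_iff_nonempty.1 hd
  have hcoord (j : Fin d) : (ℙ : Measure Ω).real {ω | t / √d ≤ |h ω j - m j|} ≤
      2 * exp (-(n * (t / √d) ^ 2) / (2 * S ^ 2)) := by
    rw [hmean j]
    simpa using measureReal_abs_sub_integral_ge_le_of_eq_average
      (fun k ↦ (hmeas (k, j)).aemeasurable) (hindep.precomp (Prod.mk_left_injective j))
      (fun k ↦ hbound (k, j)) (by simpa using (hdef · j)) (by positivity)
  rw [ENNReal.le_ofReal_iff_toReal_le (measure_ne_top _ _) (by positivity)]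
  calc (ℙ : Measure Ω).real {ω | t ≤ ‖h ω - m‖}
      ≤ (ℙ : Measure Ω).real (⋃ j, {ω | t / √d ≤ |h ω j - m j|}) :=
        measureReal_mono fun ω hω ↦ by
          simpa using EuclideanSpace.exists_div_sqrt_card_le_abs_of_le_norm hω
    _ ≤ ∑ j, (ℙ : Measure Ω).real {ω | t / √d ≤ |h ω j - m j|} :=
        measureReal_iUnion_fintype_le _
    _ ≤ ∑ _j : Fin d, 2 * exp (-(n * (t / √d) ^ 2) / (2 * S ^ 2)) :=
        Finset.sum_le_sum fun j _ ↦ hcoord j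
    _ = 2 * d * exp (-(n * t ^ 2) / (2 * d * S ^ 2)) := by
        rw [Finset.sum_const, Finset.card_univ, Fintype.card_fin, nsmul_eq_mul, div_pow,
          Real.sq_sqrt d.cast_nonneg]
        field_simp

theorem stmt_11 {Ω : Type*} [MeasureSpace Ω] [IsProbabilityMeasure (ℙ : Measure Ω)]
    (d n : ℕ) (hn : 0 < n) (hd : 0 < d)
    (ξ : Fin n × Fin d → Ω → ℝ)
    (hmeas : ∀ p, Measurable (ξ p))
    (hindep : iIndepFun ξ ℙ)
    (S : ℝ) (hS : 0 < S)
    (hbound : ∀ p, ∀ᵐ ω ∂ℙ, |ξ p ω| ≤ S)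
    (h : Ω → EuclideanSpace ℝ (Fin d))
    (hdef : ∀ ω, ∀ j : Fin d, h ω j = (1 / n : ℝ) * ∑ k : Fin n, ξ (k, j) ω)
    (μi μt m : EuclideanSpace ℝ (Fin d)) (γ : ℝ) (hγ0 : 0 ≤ γ) (hγ1 : γ < 1)
    (hm : m = (1 - γ) • μi + γ • μt)
    (hmean : ∀ j : Fin d, m j = ∫ ω, h ω j ∂ℙ)
    (ε : ℝ) (hε : 0 < ε)
    (A : Set Ω) (hA : ∀ ω ∈ A, ‖h ω - μt‖ < ε)
    (hεsmall : 0 ≤ (1 - γ) * ‖μt - μi‖ - ε) :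
    ℙ A ≤ ℙ {ω | (1 - γ) * ‖μt - μi‖ - ε ≤ ‖h ω - m‖} ∧
    ℙ {ω | (1 - γ) * ‖μt - μi‖ - ε ≤ ‖h ω - m‖} ≤
      ENNReal.ofReal (2 * d *
        Real.exp (-(n * ((1 - γ) * ‖μt - μi‖ - ε) ^ 2) / (2 * d * S ^ 2))) :=
  stmt_11_general d n hn hd ξ hmeas hindep S hbound h hdef μi μt m γ hm hmean ε A hA hεsmall
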